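/- arXiv:1003.5024 — 3 statements merged into one kernel-verified Lean document; each statement's English description precedes it below -/
import Mathlib

section
/- Let h₁, h₂ be Borel probability measures on S¹×ℝ, K > 0, and f : ℝ → ℝ 2π-periodic with sup|f| = M and Lipschitz constant L > 0. Let x₁ and x₂ be the characteristic flows with initial measures h₁ and h₂ respectively (so dx_i/dt(t;θ,ω) = ω + K ∫ f(x_i(t;θ',ω') − x_i(t;θ,ω)) dh_i(θ',ω'), x_i(0;θ,ω) = θ). Suppose δ > 0 is such that for all s ≥ 0 and all φ ∈ ℝ, |∫_{S¹×ℝ} f(x₁(s;θ',ω') − φ) (dh₁ − dh₂)(θ',ω')| ≤ Mδ. Then ∫_{S¹×ℝ} |x₁(t;θ,ω) − x₂(t;θ,ω)| dh₂(θ,ω) ≤ (Mδ/(2L)) (e^{2KLt} − 1) for all t ≥ 0. -/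
/-!
Write `y = x₁ - x₂`, so `y 0 = 0`. Inserting `∫ f (x₁ - x₁ p) dh₂` between the two interaction
integrals, the hypothesis on `h₁ - h₂` and the Lipschitz bound on `f` give
`|∂ₜ y t p| ≤ K (M δ + L g t + L |y t p|)` with `g t = ∫ |y t| dh₂`. Integrating in time and then
against `h₂` (Fubini) yields `g u ≤ ∫₀ᵘ K (M δ + 2 L g)`, and Grönwall's inequality turns this into
`g t ≤ M δ / (2 L) (exp (2 K L t) - 1)`.
-/

open MeasureTheory Real Filter

noncomputable section

instance : Fact (0 < 2 * Real.pi) := ⟨by positivity⟩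

open Set

theorem le_gronwallBound_of_le_intervalIntegral {g : ℝ → ℝ} {a b t : ℝ} (hg : Continuous g)
    (hb : 0 ≤ b) (ht : 0 ≤ t) (h : ∀ u ∈ Icc 0 t, g u ≤ ∫ s in 0..u, (a + b * g s)) :
    g t ≤ gronwallBound 0 b a t := by
  set G : ℝ → ℝ := fun u => ∫ s in 0..u, (a + b * g s)
  have hG : ∀ u, HasDerivAt G (a + b * g u) u := fun u =>
    ((continuous_const.add (continuous_const.mul hg)).integral_hasStrictDerivAt 0 u).hasDerivAt
  have hGt := le_gronwallBound_of_liminf_deriv_right_le (f := G) (δ := 0) (K := b) (ε := a)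
    (a := 0) (b := t)
    (continuous_iff_continuousAt.2 fun u => (hG u).continuousAt).continuousOn
    (fun u _ _ hr => (hG u).hasDerivWithinAt.liminf_right_slope_le hr)
    (by simp [G]) (fun u hu => by nlinarith [h u (Ico_subset_Icc_self hu)]) t ⟨ht, le_rfl⟩
  simpa using (h t ⟨ht, le_rfl⟩).trans hGt

theorem abs_le_intervalIntegral_of_abs_deriv_le {z z' w : ℝ → ℝ} {u : ℝ} (hz : Continuous z)
    (hz0 : z 0 = 0) (hw : Continuous w)
    (hderiv : ∀ s ∈ Ico 0 u, HasDerivWithinAt z (z' s) (Ici s) s)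
    (hbound : ∀ s ∈ Ico 0 u, |z' s| ≤ w s) (hu : 0 ≤ u) :
    |z u| ≤ ∫ s in 0..u, w s :=
  image_norm_le_of_norm_deriv_right_le_deriv_boundary hz.continuousOn hderiv (by simp [hz0])
    (fun s => (hw.integral_hasStrictDerivAt 0 s).hasDerivAt) hbound ⟨hu, le_rfl⟩

theorem lipschitzWith_comp_max_zero {z z' : ℝ → ℝ} {C : ℝ}
    (hderiv : ∀ s, 0 ≤ s → HasDerivAt z (z' s) s) (hC : ∀ s, 0 ≤ s → |z' s| ≤ C) :
    LipschitzWith C.toNNReal fun s => z (max s 0) := by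
  have hz : LipschitzOnWith C.toNNReal z (Ici 0) :=
    (convex_Ici 0).lipschitzOnWith_of_nnnorm_hasDerivWithin_le
      (fun s hs => (hderiv s hs).hasDerivWithinAt)
      (fun s hs => by
        rw [← NNReal.coe_le_coe, coe_nnnorm]
        exact (hC s hs).trans (Real.le_coe_toNNReal C))
  have := hz.comp ((LipschitzWith.id.max_const 0).lipschitzOnWith (s := univ))
    fun s _ => le_max_right s 0
  simpa [lipschitzOnWith_univ, Function.comp_def] using this

theorem abs_le_mul_of_abs_deriv_le {z z' : ℝ → ℝ} {C s : ℝ} (hz0 : z 0 = 0)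
    (hderiv : ∀ u, 0 ≤ u → HasDerivAt z (z' u) u) (hC : ∀ u, 0 ≤ u → |z' u| ≤ C) (hs : 0 ≤ s) :
    |z s| ≤ C * s := by
  simpa [hz0] using norm_image_sub_le_of_norm_deriv_le_segment'
    (fun u hu => (hderiv u hu.1).hasDerivWithinAt) (fun u hu => hC u hu.1) s ⟨hs, le_rfl⟩

section

variable {X : Type*} [MeasurableSpace X] {μ : Measure X}

theorem abs_integral_le_of_abs_le [IsProbabilityMeasure μ] {F : X → ℝ} {M : ℝ}
    (hM : ∀ q, |F q| ≤ M) : |∫ q, F q ∂μ| ≤ M := by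
  simpa using norm_integral_le_of_norm_le_const (f := F) (ae_of_all μ hM)

theorem lipschitzWith_integral_abs {α : Type*} [PseudoMetricSpace α] [IsProbabilityMeasure μ]
    {y : α → X → ℝ} {C : NNReal} (hint : ∀ s, Integrable (y s) μ)
    (hlip : ∀ p, LipschitzWith C (y · p)) : LipschitzWith C fun s => ∫ p, |y s p| ∂μ := by
  refine LipschitzWith.of_dist_le_mul fun s s' => ?_
  rw [Real.dist_eq, ← integral_sub (hint s).abs (hint s').abs]
  have hpt : ∀ p, ‖|y s p| - |y s' p|‖ ≤ C * dist s s' := fun p =>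
    (abs_abs_sub_abs_le_abs_sub _ _).trans (by simpa [Real.dist_eq] using (hlip p).dist_le_mul s s')
  simpa using norm_integral_le_of_norm_le_const (ae_of_all μ hpt)

theorem integrable_uncurry_of_abs_le {Y : Type*} [MeasurableSpace Y] {ν : Measure Y}
    [IsFiniteMeasure ν] [IsFiniteMeasure μ] {F : Y → X → ℝ}
    (hF : AEStronglyMeasurable (Function.uncurry F) (ν.prod μ)) {B : ℝ}
    (hB : ∀ᵐ s ∂ν, ∀ p, |F s p| ≤ B) : Integrable (Function.uncurry F) (ν.prod μ) :=
  .of_bound hF B ((Measure.quasiMeasurePreserving_fst.ae hB).mono fun z hz => hz z.2)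

theorem integral_le_intervalIntegral_integral [IsFiniteMeasure μ] {v : X → ℝ} {w : ℝ → X → ℝ}
    {u B : ℝ} (hu : 0 ≤ u) (hv : Integrable v μ) (hw : Measurable (Function.uncurry w))
    (hB : ∀ s ∈ Ioc 0 u, ∀ p, |w s p| ≤ B) (h : ∀ p, v p ≤ ∫ s in 0..u, w s p) :
    ∫ p, v p ∂μ ≤ ∫ s in 0..u, ∫ p, w s p ∂μ := by
  have hint : Integrable (Function.uncurry w) ((volume.restrict (Ioc 0 u)).prod μ) :=
    integrable_uncurry_of_abs_le hw.aestronglyMeasurable <|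
      (ae_restrict_mem measurableSet_Ioc).mono fun s hs => hB s hs
  simp_rw [intervalIntegral.integral_of_le hu] at h ⊢
  rw [integral_integral_swap hint]
  exact integral_mono hv hint.integral_prod_right h

theorem LipschitzWith.abs_integral_comp_sub_sub_le [IsProbabilityMeasure μ] {f : ℝ → ℝ}
    {L : NNReal} {M : ℝ} (hf : LipschitzWith L f) (hM : ∀ r, |f r| ≤ M) {a b : X → ℝ}
    (ha : Measurable a) (hb : Measurable b) (hab : Integrable (fun q => a q - b q) μ) (c d : ℝ) :
    |∫ q, f (a q - c) ∂μ - ∫ q, f (b q - d) ∂μ| ≤ L * (∫ q, |a q - b q| ∂μ + |c - d|) := by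
  have hint : ∀ {x : X → ℝ}, Measurable x → ∀ e, Integrable (fun q => f (x q - e)) μ :=
    fun hx e => .of_bound (hf.continuous.measurable.comp (hx.sub_const e)).aestronglyMeasurable M
      (ae_of_all _ fun q => hM _)
  have hpt : ∀ q, ‖f (a q - c) - f (b q - d)‖ ≤ L * (|a q - b q| + |c - d|) := fun q =>
    calc ‖f (a q - c) - f (b q - d)‖ ≤ L * |a q - c - (b q - d)| :=
          hf.dist_le_mul (a q - c) (b q - d)
      _ ≤ L * (|a q - b q| + |c - d|) := by
          rw [show a q - c - (b q - d) = (a q - b q) - (c - d) by ring]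
          gcongr
          exact abs_sub _ _
  rw [← integral_sub (hint ha c) (hint hb d), ← Real.norm_eq_abs]
  calc ‖∫ q, f (a q - c) - f (b q - d) ∂μ‖ ≤ ∫ q, L * (|a q - b q| + |c - d|) ∂μ :=
        norm_integral_le_of_norm_le ((hab.abs.add (integrable_const _)).const_mul _)
          (ae_of_all μ hpt)
    _ = L * (∫ q, |a q - b q| ∂μ + |c - d|) := by
        rw [integral_const_mul, integral_add hab.abs (integrable_const _), integral_const]
        simp

theorem integral_abs_le_gronwallBound_of_lipschitzWith [IsProbabilityMeasure μ]
    {y y' : ℝ → X → ℝ} {a b : ℝ} {C : NNReal} (hb : 0 ≤ b) (hmeas : ∀ s, Measurable (y s))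
    (hlip : ∀ p, LipschitzWith C (y · p)) (hy0 : ∀ p, y 0 p = 0)
    (hderiv : ∀ p, ∀ s, 0 ≤ s → HasDerivWithinAt (y · p) (y' s p) (Ici s) s)
    (hbound : ∀ p, ∀ s, 0 ≤ s → |y' s p| ≤ a + b * ∫ q, |y s q| ∂μ + b * |y s p|)
    {t : ℝ} (ht : 0 ≤ t) : ∫ p, |y t p| ∂μ ≤ gronwallBound 0 (2 * b) a t := by
  have habs : ∀ s p, |y s p| ≤ C * |s| := fun s p => by
    simpa [hy0, Real.dist_eq] using (hlip p).dist_le_mul s 0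
  have hint : ∀ s, Integrable (y s) μ := fun s =>
    .of_bound (hmeas s).aestronglyMeasurable (C * |s|) (ae_of_all μ (habs s))
  set g : ℝ → ℝ := fun s => ∫ p, |y s p| ∂μ
  have hg : Continuous g := (lipschitzWith_integral_abs hint hlip).continuous
  have hg_le : ∀ s, g s ≤ C * |s| := fun s => by
    simpa using integral_mono (hint s).abs (integrable_const _) (habs s)
  set w : ℝ → X → ℝ := fun s p => a + b * g s + b * |y s p|
  have hw : ∀ p, Continuous (w · p) := fun p =>
    (continuous_const.add (continuous_const.mul hg)).add
      (continuous_const.mul (hlip p).continuous.abs)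
  have hw_le : ∀ s p, |w s p| ≤ |a| + 2 * b * (C * |s|) := fun s p => by
    have hg0 : 0 ≤ g s := integral_nonneg fun p => abs_nonneg _
    rw [abs_le]
    constructor <;> nlinarith [neg_abs_le a, le_abs_self a, abs_nonneg (y s p), habs s p, hg_le s]
  refine le_gronwallBound_of_le_intervalIntegral hg (by positivity) ht fun u hu => ?_
  calc g u ≤ ∫ s in 0..u, ∫ p, w s p ∂μ := by
        refine integral_le_intervalIntegral_integral hu.1 (hint u).abs
          (measurable_uncurry_of_continuous_of_measurable hw fun s =>
            measurable_const.add ((hmeas s).abs.const_mul b))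
          (B := |a| + 2 * b * (C * u)) (fun s hs p => (hw_le s p).trans ?_) fun p =>
          abs_le_intervalIntegral_of_abs_deriv_le (hlip p).continuous (hy0 p) (hw p)
            (fun s hs => hderiv p s hs.1) (fun s hs => hbound p s hs.1) hu.1
        rw [abs_of_pos hs.1]
        gcongr
        exact hs.2
    _ = ∫ s in 0..u, (a + 2 * b * g s) := by
        congr 1
        ext s
        rw [integral_add (integrable_const _) ((hint s).abs.const_mul b), integral_const,
          integral_const_mul]
        simp only [probReal_univ, one_smul, g]
        ring

theorem integral_abs_le_gronwallBound [IsProbabilityMeasure μ] {y y' : ℝ → X → ℝ} {a b C : ℝ}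
    (hb : 0 ≤ b) (hmeas : ∀ s, 0 ≤ s → Measurable (y s)) (hy0 : ∀ p, y 0 p = 0)
    (hderiv : ∀ p, ∀ s, 0 ≤ s → HasDerivAt (y · p) (y' s p) s)
    (hC : ∀ p, ∀ s, 0 ≤ s → |y' s p| ≤ C)
    (hbound : ∀ p, ∀ s, 0 ≤ s → |y' s p| ≤ a + b * ∫ q, |y s q| ∂μ + b * |y s p|)
    {t : ℝ} (ht : 0 ≤ t) : ∫ p, |y t p| ∂μ ≤ gronwallBound 0 (2 * b) a t := by
  -- Freezing `y` at its initial value for negative times makes it Lipschitz in time on all of `ℝ`,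
  -- hence jointly measurable.
  have key := integral_abs_le_gronwallBound_of_lipschitzWith (μ := μ)
    (y := fun s p => y (max s 0) p) (y' := y') hb (fun s => hmeas _ (le_max_right s 0))
    (fun p => lipschitzWith_comp_max_zero (hderiv p) (hC p)) (by simpa using hy0)
    (fun p s hs => (hderiv p s hs).hasDerivWithinAt.congr_of_mem
      (fun u hu => by simp [max_eq_left (hs.trans hu)]) self_mem_Ici)
    (fun p s hs => by simpa [max_eq_left hs] using hbound p s hs) ht
  simpa [max_eq_left ht] using key

end

theorem flow_difference_integrated_bound_general
    (h₁ h₂ : Measure (AddCircle (2 * π) × ℝ))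
    [IsProbabilityMeasure h₁] [IsProbabilityMeasure h₂]
    (K : ℝ) (hK : 0 < K)
    (f : ℝ → ℝ)
    (M : ℝ) (hM : ∀ r : ℝ, |f r| ≤ M)
    (L : NNReal) (hL : 0 < L) (hLip : LipschitzWith L f)
    -- real liftings of the two characteristic flows
    (x₁ x₂ : ℝ → AddCircle (2 * π) × ℝ → ℝ)
    (hsame : ∀ p, x₁ 0 p = x₂ 0 p)
    (hmeas₁ : ∀ t : ℝ, 0 ≤ t → Measurable (x₁ t))
    (hmeas₂ : ∀ t : ℝ, 0 ≤ t → Measurable (x₂ t))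
    (hode₁ : ∀ p : AddCircle (2 * π) × ℝ, ∀ t : ℝ, 0 ≤ t →
      HasDerivAt (fun s => x₁ s p) (p.2 + K * ∫ q, f (x₁ t q - x₁ t p) ∂h₁) t)
    (hode₂ : ∀ p : AddCircle (2 * π) × ℝ, ∀ t : ℝ, 0 ≤ t →
      HasDerivAt (fun s => x₂ s p) (p.2 + K * ∫ q, f (x₂ t q - x₂ t p) ∂h₂) t)
    (δ : ℝ)
    (hδ : ∀ s : ℝ, 0 ≤ s → ∀ φ : ℝ,
      |(∫ q, f (x₁ s q - φ) ∂h₁) - ∫ q, f (x₁ s q - φ) ∂h₂| ≤ M * δ) :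
    ∀ t : ℝ, 0 ≤ t →
      ∫ p, |x₁ t p - x₂ t p| ∂h₂ ≤ M * δ / (2 * L) * (Real.exp (2 * K * L * t) - 1) := by
  intro t ht
  set v : ℝ → AddCircle (2 * π) × ℝ → ℝ := fun s p =>
    K * ((∫ q, f (x₁ s q - x₁ s p) ∂h₁) - ∫ q, f (x₂ s q - x₂ s p) ∂h₂)
  have hy0 : ∀ p, x₁ 0 p - x₂ 0 p = 0 := fun p => sub_eq_zero.2 (hsame p)
  have hmeas : ∀ s, 0 ≤ s → Measurable fun p => x₁ s p - x₂ s p := fun s hs =>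
    (hmeas₁ s hs).sub (hmeas₂ s hs)
  have hderiv : ∀ p, ∀ s, 0 ≤ s → HasDerivAt (fun u => x₁ u p - x₂ u p) (v s p) s :=
    fun p s hs => ((hode₁ p s hs).sub (hode₂ p s hs)).congr_deriv (by ring)
  -- This crude bound supplies the integrability and time regularity of `x₁ - x₂`.
  have hv : ∀ p, ∀ s, 0 ≤ s → |v s p| ≤ 2 * K * M := fun p s hs => by
    rw [abs_mul, abs_of_pos hK]
    nlinarith [abs_sub (∫ q, f (x₁ s q - x₁ s p) ∂h₁) (∫ q, f (x₂ s q - x₂ s p) ∂h₂),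
      abs_integral_le_of_abs_le (μ := h₁) fun q => hM (x₁ s q - x₁ s p),
      abs_integral_le_of_abs_le (μ := h₂) fun q => hM (x₂ s q - x₂ s p)]
  have hbound : ∀ p, ∀ s, 0 ≤ s → |v s p| ≤
      K * (M * δ) + K * L * ∫ q, |x₁ s q - x₂ s q| ∂h₂ + K * L * |x₁ s p - x₂ s p| := by
    intro p s hs
    have hint : Integrable (fun q => x₁ s q - x₂ s q) h₂ :=
      .of_bound (hmeas s hs).aestronglyMeasurable (2 * K * M * s)
        (ae_of_all _ fun q => abs_le_mul_of_abs_deriv_le (hy0 q) (hderiv q) (hv q) hs)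
    have hLipInt := hLip.abs_integral_comp_sub_sub_le hM (hmeas₁ s hs) (hmeas₂ s hs) hint
      (x₁ s p) (x₂ s p)
    rw [abs_mul, abs_of_pos hK]
    nlinarith [abs_sub_le (∫ q, f (x₁ s q - x₁ s p) ∂h₁) (∫ q, f (x₁ s q - x₁ s p) ∂h₂)
      (∫ q, f (x₂ s q - x₂ s p) ∂h₂), hδ s hs (x₁ s p)]
  have key := integral_abs_le_gronwallBound (by positivity) hmeas hy0 hderiv hv hbound ht
  rw [gronwallBound_of_K_ne_0 (by positivity)] at key
  convert key using 1
  field_simp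
  ring

/-- Let `h₁, h₂` be Borel probability measures on `S¹ × ℝ`, `K > 0`,
and `f : ℝ → ℝ` be `2π`-periodic with `sup |f| = M` and Lipschitz constant `L > 0`.
Let `x₁, x₂` be (real liftings of) the characteristic flows with initial measures
`h₁, h₂` and the same initial condition `xᵢ(0;θ,ω) = θ`.  If `δ > 0` is such that
`|∫ f(x₁(s;θ',ω') − φ) (dh₁ − dh₂)| ≤ M δ` for all `s ≥ 0` and `φ ∈ ℝ`, then
`∫ |x₁(t;θ,ω) − x₂(t;θ,ω)| dh₂ ≤ (Mδ/(2L)) (e^{2KLt} − 1)` for all `t ≥ 0`. -/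
theorem flow_difference_integrated_bound
    (h₁ h₂ : Measure (AddCircle (2 * π) × ℝ))
    [IsProbabilityMeasure h₁] [IsProbabilityMeasure h₂]
    (K : ℝ) (hK : 0 < K)
    (f : ℝ → ℝ) (hper : Function.Periodic f (2 * π))
    (M : ℝ) (hM : ∀ r : ℝ, |f r| ≤ M)
    (L : NNReal) (hL : 0 < L) (hLip : LipschitzWith L f)
    -- real liftings of the two characteristic flows
    (x₁ x₂ : ℝ → AddCircle (2 * π) × ℝ → ℝ)
    (hinit : ∀ p : AddCircle (2 * π) × ℝ, ((x₁ 0 p : ℝ) : AddCircle (2 * π)) = p.1)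
    (hsame : ∀ p, x₁ 0 p = x₂ 0 p)
    (hmeas₁ : ∀ t : ℝ, 0 ≤ t → Measurable (x₁ t))
    (hmeas₂ : ∀ t : ℝ, 0 ≤ t → Measurable (x₂ t))
    (hode₁ : ∀ p : AddCircle (2 * π) × ℝ, ∀ t : ℝ, 0 ≤ t →
      HasDerivAt (fun s => x₁ s p) (p.2 + K * ∫ q, f (x₁ t q - x₁ t p) ∂h₁) t)
    (hode₂ : ∀ p : AddCircle (2 * π) × ℝ, ∀ t : ℝ, 0 ≤ t →
      HasDerivAt (fun s => x₂ s p) (p.2 + K * ∫ q, f (x₂ t q - x₂ t p) ∂h₂) t)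
    (δ : ℝ) (hδpos : 0 < δ)
    (hδ : ∀ s : ℝ, 0 ≤ s → ∀ φ : ℝ,
      |(∫ q, f (x₁ s q - φ) ∂h₁) - ∫ q, f (x₁ s q - φ) ∂h₂| ≤ M * δ) :
    ∀ t : ℝ, 0 ≤ t →
      ∫ p, |x₁ t p - x₂ t p| ∂h₂ ≤ M * δ / (2 * L) * (Real.exp (2 * K * L * t) - 1) :=
  flow_difference_integrated_bound_general h₁ h₂ K hK f M hM L hL hLip x₁ x₂ hsame hmeas₁ hmeas₂
    hode₁ hode₂ δ hδ
end
end

section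
/- Under the same hypotheses as the integrated bound — namely h₁, h₂ Borel probability measures on S¹×ℝ, K > 0, f : ℝ → ℝ 2π-periodic with sup|f| = M and Lipschitz constant L > 0, x₁, x₂ the corresponding characteristic flows with x_i(0;θ,ω) = θ, and δ > 0 such that |∫ f(x₁(s;θ',ω') − φ) (dh₁ − dh₂)| ≤ Mδ for all s ≥ 0, φ ∈ ℝ — the pointwise estimate |x₁(t;θ,ω) − x₂(t;θ,ω)| ≤ (Mδ/(2L)) (e^{2KLt} − 1) holds for all t ≥ 0 and all (θ,ω) ∈ S¹×ℝ. -/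
open MeasureTheory Real Filter

noncomputable section

/-!
Write `G t p = x₁ t p - x₂ t p` and `u t = sup_p |G t p|`. Inserting `∫ f (x₁ t q - x₁ t p) dh₂`
between the two drift integrals, the `δ`-hypothesis bounds one half by `M δ` and the Lipschitz
bound the other by `2 L u t`, so `|∂ₜ G t p| ≤ K M δ + 2 K L u t`. Every `G · p` is
`2 K M`-Lipschitz in time, hence `u` is continuous and its upper right Dini derivative is at most
`K M δ + 2 K L u`; since `u 0 = 0`, Gronwall's inequality gives
`u t ≤ (M δ / 2 L) (e^{2 K L t} - 1)`.
-/

open Set Topology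

theorem eventually_slope_lt_of_sub_le {u : ℝ → ℝ} {x A C r : ℝ} (hr : A < r)
    (hstep : ∀ z, x < z → u z - u x ≤ (z - x) * (A + C * (z - x))) :
    ∀ᶠ z in 𝓝[>] x, (z - x)⁻¹ * (u z - u x) < r := by
  have hlim : Tendsto (fun z => A + C * (z - x)) (𝓝[>] x) (𝓝 A) := by
    have : Continuous fun z => A + C * (z - x) := by fun_prop
    simpa using (this.tendsto x).mono_left nhdsWithin_le_nhds
  filter_upwards [hlim.eventually (gt_mem_nhds hr), self_mem_nhdsWithin] with z hz hxz
  rw [inv_mul_lt_iff₀ (sub_pos.2 hxz)]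
  calc u z - u x ≤ (z - x) * (A + C * (z - x)) := hstep z hxz
    _ < (z - x) * r := by gcongr; exact sub_pos.2 hxz

theorem le_gronwallBound_of_sub_le {u : ℝ → ℝ} {a b δ K ε C : ℝ}
    (hu : ContinuousOn u (Icc a b)) (ha : u a ≤ δ)
    (hstep : ∀ x ∈ Ico a b, ∀ z, x < z →
      u z - u x ≤ (z - x) * (K * u x + ε + C * (z - x))) :
    ∀ t ∈ Icc a b, u t ≤ gronwallBound δ K ε (t - a) :=
  le_gronwallBound_of_liminf_deriv_right_le hu
    (fun x hx _ hr => (eventually_slope_lt_of_sub_le hr (hstep x hx)).frequently) ha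
    (fun _ _ => le_rfl)

theorem abs_sub_le_of_hasDerivAt {g g' : ℝ → ℝ} {s t C : ℝ} (hst : s ≤ t)
    (hg : ∀ r ∈ Icc s t, HasDerivAt g (g' r) r) (hC : ∀ r ∈ Icc s t, |g' r| ≤ C) :
    |g t - g s| ≤ C * (t - s) :=
  norm_image_sub_le_of_norm_deriv_le_segment' (fun r hr => (hg r hr).hasDerivWithinAt)
    (fun r hr => hC r (Ico_subset_Icc_self hr)) t ⟨hst, le_rfl⟩

theorem ciSup_le_ciSup_add {ι : Type*} [Nonempty ι] {F₁ F₂ : ι → ℝ} {c : ℝ}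
    (h₂ : BddAbove (range F₂)) (h : ∀ i, F₁ i ≤ F₂ i + c) : ⨆ i, F₁ i ≤ (⨆ i, F₂ i) + c :=
  ciSup_le fun i => (h i).trans (add_le_add_left (le_ciSup h₂ i) c)

section SupGronwall

variable {α : Type*} {G D : ℝ → α → ℝ} {C : ℝ}

/-- Junk value `0` for an unbounded family; below it is only used where `|G t p| ≤ C t`. -/
def supAbs (G : ℝ → α → ℝ) (t : ℝ) : ℝ := ⨆ p, |G t p|

theorem abs_sub_le_of_abs_deriv_le (hG : ∀ p, ∀ t, 0 ≤ t → HasDerivAt (G · p) (D t p) t)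
    (hC : ∀ t, 0 ≤ t → ∀ p, |D t p| ≤ C) {s t : ℝ} (hs : 0 ≤ s) (ht : 0 ≤ t) (p : α) :
    |G t p - G s p| ≤ C * |t - s| := by
  rcases le_total s t with hst | hts
  · rw [abs_of_nonneg (sub_nonneg.2 hst)]
    exact abs_sub_le_of_hasDerivAt hst (fun r hr => hG p r (hs.trans hr.1))
      (fun r hr => hC r (hs.trans hr.1) p)
  · rw [abs_sub_comm, abs_sub_comm t, abs_of_nonneg (sub_nonneg.2 hts)]
    exact abs_sub_le_of_hasDerivAt hts (fun r hr => hG p r (ht.trans hr.1))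
      (fun r hr => hC r (ht.trans hr.1) p)

theorem le_supAbs (hG0 : ∀ p, G 0 p = 0) (hG : ∀ p, ∀ t, 0 ≤ t → HasDerivAt (G · p) (D t p) t)
    (hC : ∀ t, 0 ≤ t → ∀ p, |D t p| ≤ C) {t : ℝ} (ht : 0 ≤ t) (p : α) :
    |G t p| ≤ supAbs G t := by
  refine le_ciSup (f := fun q => |G t q|) ⟨C * t, ?_⟩ p
  rintro _ ⟨q, rfl⟩
  simpa [hG0 q, abs_of_nonneg ht] using abs_sub_le_of_abs_deriv_le hG hC le_rfl ht q

theorem supAbs_le_add [Nonempty α] (hG0 : ∀ p, G 0 p = 0)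
    (hG : ∀ p, ∀ t, 0 ≤ t → HasDerivAt (G · p) (D t p) t)
    (hC : ∀ t, 0 ≤ t → ∀ p, |D t p| ≤ C) {s t : ℝ} (hs : 0 ≤ s) (ht : 0 ≤ t) :
    supAbs G t ≤ supAbs G s + C * |t - s| := by
  refine ciSup_le_ciSup_add ⟨supAbs G s, ?_⟩ fun p => ?_
  · rintro _ ⟨q, rfl⟩
    exact le_supAbs hG0 hG hC hs q
  · have := abs_sub_le_of_abs_deriv_le hG hC hs ht p
    linarith [abs_sub_abs_le_abs_sub (G t p) (G s p)]

theorem continuousOn_supAbs [Nonempty α] (hG0 : ∀ p, G 0 p = 0)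
    (hG : ∀ p, ∀ t, 0 ≤ t → HasDerivAt (G · p) (D t p) t)
    (hC : ∀ t, 0 ≤ t → ∀ p, |D t p| ≤ C) : ContinuousOn (supAbs G) (Ici 0) := by
  have hC0 : 0 ≤ C := (abs_nonneg _).trans (hC 0 le_rfl (Classical.arbitrary α))
  refine (LipschitzOnWith.of_dist_le_mul fun t ht s hs => ?_).continuousOn (K := C.toNNReal)
  rw [Real.dist_eq, Real.dist_eq, Real.coe_toNNReal C hC0, abs_sub_le_iff]
  constructor
  · linarith [supAbs_le_add hG0 hG hC hs ht]
  · have := supAbs_le_add hG0 hG hC ht hs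
    rw [abs_sub_comm] at this
    linarith

theorem supAbs_sub_le [Nonempty α] {A B : ℝ} (hB : 0 ≤ B) (hG0 : ∀ p, G 0 p = 0)
    (hG : ∀ p, ∀ t, 0 ≤ t → HasDerivAt (G · p) (D t p) t)
    (hC : ∀ t, 0 ≤ t → ∀ p, |D t p| ≤ C)
    (hD : ∀ t, 0 ≤ t → ∀ u, (∀ q, |G t q| ≤ u) → ∀ p, |D t p| ≤ A + B * u)
    {x z : ℝ} (hx : 0 ≤ x) (hxz : x ≤ z) :
    supAbs G z - supAbs G x ≤ (z - x) * (B * supAbs G x + A + B * C * (z - x)) := by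
  have hC0 : 0 ≤ C := (abs_nonneg _).trans (hC 0 le_rfl (Classical.arbitrary α))
  have hderiv : ∀ r ∈ Icc x z, ∀ p, |D r p| ≤ B * supAbs G x + A + B * C * (z - x) := by
    intro r hr p
    have hr0 : 0 ≤ r := hx.trans hr.1
    have hsup : supAbs G r ≤ supAbs G x + C * (z - x) := by
      have := supAbs_le_add hG0 hG hC hx hr0
      rw [abs_of_nonneg (sub_nonneg.2 hr.1)] at this
      nlinarith [hr.2]
    calc |D r p| ≤ A + B * supAbs G r := hD r hr0 _ (le_supAbs hG0 hG hC hr0) p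
      _ ≤ A + B * (supAbs G x + C * (z - x)) := by gcongr
      _ = _ := by ring
  refine sub_le_iff_le_add.2 (ciSup_le fun p => ?_)
  have hp := abs_sub_le_of_hasDerivAt hxz (fun r hr => hG p r (hx.trans hr.1))
    (fun r hr => hderiv r hr p)
  linarith [abs_sub_abs_le_abs_sub (G z p) (G x p), le_supAbs hG0 hG hC hx p]

theorem abs_le_gronwallBound_of_abs_deriv_le [Nonempty α] {A B : ℝ} (hB : 0 ≤ B)
    (hG0 : ∀ p, G 0 p = 0) (hG : ∀ p, ∀ t, 0 ≤ t → HasDerivAt (G · p) (D t p) t)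
    (hC : ∀ t, 0 ≤ t → ∀ p, |D t p| ≤ C)
    (hD : ∀ t, 0 ≤ t → ∀ u, (∀ q, |G t q| ≤ u) → ∀ p, |D t p| ≤ A + B * u)
    {t : ℝ} (ht : 0 ≤ t) (p : α) : |G t p| ≤ gronwallBound 0 B A t := by
  have h0 : supAbs G 0 ≤ 0 := ciSup_le fun q => by simp [hG0 q]
  have := le_gronwallBound_of_sub_le ((continuousOn_supAbs hG0 hG hC).mono Icc_subset_Ici_self)
    h0 (fun x hx z hxz => supAbs_sub_le hB hG0 hG hC hD hx.1 hxz.le) t ⟨ht, le_rfl⟩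
  rw [sub_zero] at this
  exact (le_supAbs hG0 hG hC ht p).trans this

end SupGronwall

section ProbabilityIntegral

variable {α : Type*} [MeasurableSpace α] {μ : Measure α}

theorem abs_integral_le_of_abs_le_s4 [IsProbabilityMeasure μ] {F : α → ℝ} {C : ℝ}
    (h : ∀ q, |F q| ≤ C) : |∫ q, F q ∂μ| ≤ C := by
  simpa using norm_integral_le_of_norm_le_const (μ := μ)
    (Eventually.of_forall fun q => (Real.norm_eq_abs _).le.trans (h q))

theorem integrable_comp_of_abs_le [IsFiniteMeasure μ] {f : ℝ → ℝ} {M : ℝ} (hf : Measurable f)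
    (hM : ∀ r, |f r| ≤ M) {y : α → ℝ} (hy : Measurable y) : Integrable (fun q => f (y q)) μ :=
  .of_bound (hf.comp hy).aestronglyMeasurable M (Eventually.of_forall fun q => hM (y q))

theorem abs_integral_comp_sub_sub_le [IsProbabilityMeasure μ] {f : ℝ → ℝ} {M : ℝ} {L : NNReal}
    (hM : ∀ r, |f r| ≤ M) (hf : LipschitzWith L f) {y₁ y₂ : α → ℝ} (hy₁ : Measurable y₁)
    (hy₂ : Measurable y₂) {u : ℝ} (hu : ∀ q, |y₁ q - y₂ q| ≤ u) (p : α) :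
    |∫ q, f (y₁ q - y₁ p) ∂μ - ∫ q, f (y₂ q - y₂ p) ∂μ| ≤ 2 * L * u := by
  have hfm := hf.continuous.measurable
  rw [← integral_sub (integrable_comp_of_abs_le hfm hM (hy₁.sub_const _))
    (integrable_comp_of_abs_le hfm hM (hy₂.sub_const _))]
  refine abs_integral_le_of_abs_le_s4 fun q => ?_
  calc |f (y₁ q - y₁ p) - f (y₂ q - y₂ p)|
      ≤ L * |(y₁ q - y₂ q) - (y₁ p - y₂ p)| := by
        simpa only [Real.dist_eq, sub_sub_sub_comm] using
          hf.dist_le_mul (y₁ q - y₁ p) (y₂ q - y₂ p)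
    _ ≤ L * (u + u) := by gcongr; exact (abs_sub _ _).trans (add_le_add (hu q) (hu p))
    _ = 2 * L * u := by ring

end ProbabilityIntegral

theorem flow_difference_pointwise_bound_general
    (h₁ h₂ : Measure (AddCircle (2 * π) × ℝ))
    [IsProbabilityMeasure h₁] [IsProbabilityMeasure h₂]
    (K : ℝ) (hK : 0 < K)
    (f : ℝ → ℝ)
    (M : ℝ) (hM : ∀ r : ℝ, |f r| ≤ M)
    (L : NNReal) (hL : 0 < L) (hLip : LipschitzWith L f)
    -- real liftings of the two characteristic flows
    (x₁ x₂ : ℝ → AddCircle (2 * π) × ℝ → ℝ)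
    (hsame : ∀ p, x₁ 0 p = x₂ 0 p)
    (hmeas₁ : ∀ t : ℝ, 0 ≤ t → Measurable (x₁ t))
    (hmeas₂ : ∀ t : ℝ, 0 ≤ t → Measurable (x₂ t))
    (hode₁ : ∀ p : AddCircle (2 * π) × ℝ, ∀ t : ℝ, 0 ≤ t →
      HasDerivAt (fun s => x₁ s p) (p.2 + K * ∫ q, f (x₁ t q - x₁ t p) ∂h₁) t)
    (hode₂ : ∀ p : AddCircle (2 * π) × ℝ, ∀ t : ℝ, 0 ≤ t →
      HasDerivAt (fun s => x₂ s p) (p.2 + K * ∫ q, f (x₂ t q - x₂ t p) ∂h₂) t)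
    (δ : ℝ)
    (hδ : ∀ s : ℝ, 0 ≤ s → ∀ φ : ℝ,
      |(∫ q, f (x₁ s q - φ) ∂h₁) - ∫ q, f (x₁ s q - φ) ∂h₂| ≤ M * δ) :
    ∀ t : ℝ, 0 ≤ t → ∀ p : AddCircle (2 * π) × ℝ,
      |x₁ t p - x₂ t p| ≤ M * δ / (2 * L) * (Real.exp (2 * K * L * t) - 1) := by
  set D : ℝ → AddCircle (2 * π) × ℝ → ℝ := fun t p =>
    K * ((∫ q, f (x₁ t q - x₁ t p) ∂h₁) - ∫ q, f (x₂ t q - x₂ t p) ∂h₂)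
  have hderiv : ∀ p t, 0 ≤ t → HasDerivAt (fun s => x₁ s p - x₂ s p) (D t p) t :=
    fun p t ht => ((hode₁ p t ht).sub (hode₂ p t ht)).congr_deriv (by ring)
  have habsD : ∀ t p, |D t p| = K * |(∫ q, f (x₁ t q - x₁ t p) ∂h₁) -
      ∫ q, f (x₂ t q - x₂ t p) ∂h₂| := fun t p => by rw [abs_mul, abs_of_pos hK]
  have hcrude : ∀ t, 0 ≤ t → ∀ p, |D t p| ≤ 2 * K * M := fun t _ p => by
    have := (abs_sub _ _).trans
      (add_le_add (abs_integral_le_of_abs_le_s4 (μ := h₁) fun q => hM (x₁ t q - x₁ t p))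
        (abs_integral_le_of_abs_le_s4 (μ := h₂) fun q => hM (x₂ t q - x₂ t p)))
    rw [habsD]
    nlinarith
  have hdrift : ∀ t, 0 ≤ t → ∀ u, (∀ q, |x₁ t q - x₂ t q| ≤ u) → ∀ p,
      |D t p| ≤ K * M * δ + 2 * K * L * u := fun t ht u hu p => by
    have := (abs_sub_le _ (∫ q, f (x₁ t q - x₁ t p) ∂h₂) _).trans (add_le_add (hδ t ht _)
      (abs_integral_comp_sub_sub_le hM hLip (hmeas₁ t ht) (hmeas₂ t ht) hu p))
    rw [habsD]
    nlinarith
  intro t ht p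
  have := abs_le_gronwallBound_of_abs_deriv_le (G := fun t p => x₁ t p - x₂ t p)
    (by positivity) (fun p => sub_eq_zero.2 (hsame p)) hderiv hcrude hdrift ht p
  rw [gronwallBound_of_K_ne_0 (by positivity)] at this
  convert this using 1
  field_simp
  ring

/-- Under the same hypotheses as Statement 3 — `h₁, h₂` Borel
probability measures on `S¹ × ℝ`, `K > 0`, `f` a `2π`-periodic function with
`sup |f| = M` and Lipschitz constant `L > 0`, `x₁, x₂` the (real liftings of the)
characteristic flows with `xᵢ(0;θ,ω) = θ`, and `δ > 0` such that
`|∫ f(x₁(s;θ',ω') − φ) (dh₁ − dh₂)| ≤ M δ` for all `s ≥ 0`, `φ ∈ ℝ` — the pointwise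
estimate `|x₁(t;θ,ω) − x₂(t;θ,ω)| ≤ (Mδ/(2L)) (e^{2KLt} − 1)` holds for all `t ≥ 0`
and all `(θ, ω) ∈ S¹ × ℝ`. -/
theorem flow_difference_pointwise_bound
    (h₁ h₂ : Measure (AddCircle (2 * π) × ℝ))
    [IsProbabilityMeasure h₁] [IsProbabilityMeasure h₂]
    (K : ℝ) (hK : 0 < K)
    (f : ℝ → ℝ) (hper : Function.Periodic f (2 * π))
    (M : ℝ) (hM : ∀ r : ℝ, |f r| ≤ M)
    (L : NNReal) (hL : 0 < L) (hLip : LipschitzWith L f)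
    -- real liftings of the two characteristic flows
    (x₁ x₂ : ℝ → AddCircle (2 * π) × ℝ → ℝ)
    (hinit : ∀ p : AddCircle (2 * π) × ℝ, ((x₁ 0 p : ℝ) : AddCircle (2 * π)) = p.1)
    (hsame : ∀ p, x₁ 0 p = x₂ 0 p)
    (hmeas₁ : ∀ t : ℝ, 0 ≤ t → Measurable (x₁ t))
    (hmeas₂ : ∀ t : ℝ, 0 ≤ t → Measurable (x₂ t))
    (hode₁ : ∀ p : AddCircle (2 * π) × ℝ, ∀ t : ℝ, 0 ≤ t →
      HasDerivAt (fun s => x₁ s p) (p.2 + K * ∫ q, f (x₁ t q - x₁ t p) ∂h₁) t)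
    (hode₂ : ∀ p : AddCircle (2 * π) × ℝ, ∀ t : ℝ, 0 ≤ t →
      HasDerivAt (fun s => x₂ s p) (p.2 + K * ∫ q, f (x₂ t q - x₂ t p) ∂h₂) t)
    (δ : ℝ) (hδpos : 0 < δ)
    (hδ : ∀ s : ℝ, 0 ≤ s → ∀ φ : ℝ,
      |(∫ q, f (x₁ s q - φ) ∂h₁) - ∫ q, f (x₁ s q - φ) ∂h₂| ≤ M * δ) :
    ∀ t : ℝ, 0 ≤ t → ∀ p : AddCircle (2 * π) × ℝ,
      |x₁ t p - x₂ t p| ≤ M * δ / (2 * L) * (Real.exp (2 * K * L * t) - 1) :=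
  flow_difference_pointwise_bound_general h₁ h₂ K hK f M hM L hL hLip x₁ x₂ hsame hmeas₁ hmeas₂
    hode₁ hode₂ δ hδ
end
end

section
/- Let K > 0, T > 0, and let a : S¹×ℝ → ℝ be bounded and Lipschitz continuous. Then there exists a constant C > 0 (depending on K, T and a) such that for every δ > 0 and all Borel probability measures h₁, h₂ on S¹×ℝ satisfying |∫ b (dh₁ − dh₂)| ≤ δ (sup|b| + Lip(b)) for every bounded Lipschitz function b : S¹×ℝ → ℝ, the corresponding solutions ρ_{t,1}, ρ_{t,2} of the continuous Kuramoto model with ρ_{0,1} = h₁, ρ_{0,2} = h₂ satisfy |∫ a (dρ_{t,1} − dρ_{t,2})| ≤ C δ for all 0 ≤ t ≤ T; i.e., for Lipschitz test functions the weak distance of solutions is of order O(δ) in the weak distance of initial measures. -/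
open MeasureTheory Real Filter

noncomputable section

/-- The characteristic flow of the continuous Kuramoto model with coupling constant `K`
and initial measure `h`: `x(0;θ,ω) = θ`, `x(t;·)` is Borel measurable, and `t ↦ x(t;θ,ω)`
is `C¹` with `∂x/∂t = ω + K ∫ sin(x(t;θ',ω') − x(t;θ,ω)) dh(θ',ω')` for `t ≥ 0`
(`Sin` denotes the descent of `sin` to `S¹ = ℝ/2πℤ`). -/
def IsKuramotoFlow (K : ℝ) (Sin : AddCircle (2 * π) → ℝ)
    (h : Measure (AddCircle (2 * π) × ℝ))
    (x : ℝ → AddCircle (2 * π) × ℝ → AddCircle (2 * π)) : Prop :=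
  (∀ p, x 0 p = p.1) ∧
  (∀ t : ℝ, 0 ≤ t → Measurable (x t)) ∧
  (∀ p : AddCircle (2 * π) × ℝ, ∃ y : ℝ → ℝ,
    ContDiff ℝ 1 y ∧ (∀ t : ℝ, (y t : AddCircle (2 * π)) = x t p) ∧
    ∀ t : ℝ, 0 ≤ t →
      HasDerivAt y (p.2 + K * ∫ q, Sin (x t q - x t p) ∂h) t)

/-!
Lift the flows to `ℝ`. Along a characteristic, the velocities of the flows driven by `h₁` and
`h₂` differ by at most `K` times the sum of three terms: the test of `h₁ - h₂` against the
bounded Lipschitz function `sin (x₁ t · - x₁ t p)`, which is `O(δ)` because `x₁ t` is Lipschitz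
(Grönwall); the mean gap `ψ t = ∫ dist (x₁ t q) (x₂ t q) dh₂(q)`; and the gap at `p` itself.
Integrating in time and then against `h₂` gives `ψ t ≤ K O(δ) T + 2K ∫₀ᵗ ψ`, so `ψ = O(δ)` on
`[0, T]` by Grönwall. Finally `∫ a dρ₁ - ∫ a dρ₂` splits into the test of `h₁ - h₂` against the
Lipschitz function `a ∘ (x₁ t, ·.2)`, and `∫ (a ∘ (x₁ t, ·.2) - a ∘ (x₂ t, ·.2)) dh₂ ≤ Lip(a) ψ t`.
-/

open Set

namespace AddCircle

variable {p : ℝ}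

theorem norm_coe_le_abs (r : ℝ) : ‖(r : AddCircle p)‖ ≤ |r| :=
  QuotientAddGroup.norm_mk_le_norm

theorem dist_coe_le_dist_coe_add_abs (a b a' b' : ℝ) :
    dist (a : AddCircle p) b ≤ dist (a' : AddCircle p) b' + |a - b - (a' - b')| := by
  have hsplit : ((a - b : ℝ) : AddCircle p) =
      ((a' - b' : ℝ) : AddCircle p) + ((a - b - (a' - b') : ℝ) : AddCircle p) := by
    rw [← coe_add, add_sub_cancel]
  rw [dist_eq_norm, dist_eq_norm, ← coe_sub, ← coe_sub, hsplit]
  exact (norm_add_le _ _).trans (by gcongr; exact norm_coe_le_abs _)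

theorem dist_coe_le_add_intervalIntegral {y₁ y₂ : ℝ → ℝ} (hy₁ : ContDiff ℝ 1 y₁)
    (hy₂ : ContDiff ℝ 1 y₂) {t : ℝ} (ht : 0 ≤ t) {B : ℝ → ℝ}
    (hB : IntervalIntegrable B volume 0 t)
    (hbound : ∀ s ∈ Icc 0 t, |deriv y₁ s - deriv y₂ s| ≤ B s) :
    dist (y₁ t : AddCircle p) (y₂ t) ≤ dist (y₁ 0 : AddCircle p) (y₂ 0) + ∫ s in 0..t, B s := by
  have hcont : Continuous fun s => deriv y₁ s - deriv y₂ s :=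
    (hy₁.continuous_deriv le_rfl).sub (hy₂.continuous_deriv le_rfl)
  have hftc : ∫ s in 0..t, (deriv y₁ s - deriv y₂ s) = y₁ t - y₂ t - (y₁ 0 - y₂ 0) :=
    intervalIntegral.integral_eq_sub_of_hasDerivAt
      (fun s _ => (hy₁.differentiable one_ne_zero s).hasDerivAt.sub
        (hy₂.differentiable one_ne_zero s).hasDerivAt)
      (hcont.intervalIntegrable 0 t)
  calc dist (y₁ t : AddCircle p) (y₂ t)
      ≤ dist (y₁ 0 : AddCircle p) (y₂ 0) + |y₁ t - y₂ t - (y₁ 0 - y₂ 0)| :=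
        dist_coe_le_dist_coe_add_abs _ _ _ _
    _ ≤ dist (y₁ 0 : AddCircle p) (y₂ 0) + ∫ s in 0..t, B s := by
        rw [← hftc]
        gcongr
        exact (intervalIntegral.abs_integral_le_integral_abs ht).trans
          (intervalIntegral.integral_mono_on ht (hcont.abs.intervalIntegrable 0 t) hB hbound)

theorem lipschitzWith_of_comp_coe {Y : Type*} [PseudoMetricSpace Y] {f : AddCircle p → Y}
    {g : ℝ → Y} {L : NNReal} (hfg : ∀ r : ℝ, f r = g r) (hg : LipschitzWith L g) :
    LipschitzWith L f := by
  refine LipschitzWith.of_dist_le_mul fun u v => ?_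
  obtain ⟨a, rfl⟩ := QuotientAddGroup.mk_surjective u
  obtain ⟨b, rfl⟩ := QuotientAddGroup.mk_surjective v
  -- shift `a` by the multiple of `p` that realises the distance on the circle
  set n : ℤ := round (p⁻¹ * (a - b))
  have hshift : ((a - n * p : ℝ) : AddCircle p) = a := by
    rw [coe_sub, ← zsmul_eq_mul, coe_zsmul, coe_period, smul_zero, sub_zero]
  calc dist (f a) (f b) = dist (g (a - n * p)) (g b) := by
        rw [← hfg, ← hfg, hshift]
    _ ≤ L * dist (a - n * p) b := hg.dist_le_mul _ _
    _ = L * dist (a : AddCircle p) b := by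
        rw [dist_eq_norm (a : AddCircle p), ← coe_sub, norm_eq, Real.dist_eq, sub_right_comm]

theorem dist_le_pi (u v : AddCircle (2 * π)) : dist u v ≤ π := by
  simpa [dist_eq_norm, abs_of_pos pi_pos] using
    AddCircle.norm_le_half_period (2 * π) (x := u - v) (by positivity)

end AddCircle

theorem le_mul_exp_of_le_add_mul_intervalIntegral {g : ℝ → ℝ} {A L T : ℝ} (hg : Continuous g)
    (hL : 0 ≤ L) (h : ∀ t ∈ Icc 0 T, g t ≤ A + L * ∫ s in 0..t, g s) :
    ∀ t ∈ Icc 0 T, g t ≤ A * exp (L * t) := by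
  intro t ht
  have hΦ : ∀ s, HasDerivAt (fun t => ∫ s in 0..t, g s) (g s) s := fun s =>
    (hg.integral_hasStrictDerivAt 0 s).hasDerivAt
  have hgron := le_gronwallBound_of_liminf_deriv_right_le (δ := 0) (K := L) (ε := A)
    (intervalIntegral.continuous_primitive (fun _ _ => hg.intervalIntegrable _ _) 0).continuousOn
    (fun s _ _ hr => (hΦ s).hasDerivWithinAt.liminf_right_slope_le hr) (by simp)
    (fun s hs => by linarith [h s (Ico_subset_Icc_self hs)]) t ht
  have hbound : L * gronwallBound 0 L A t = A * (exp (L * t) - 1) := by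
    rcases hL.eq_or_lt with rfl | hL
    · simp [gronwallBound_K0]
    · rw [gronwallBound_of_K_ne_0 hL.ne']
      field_simp
      ring
  calc g t ≤ A + L * ∫ s in 0..t, g s := h t ht
    _ ≤ A + L * gronwallBound 0 L A (t - 0) := by gcongr
    _ = A * exp (L * t) := by rw [sub_zero, hbound]; ring

section BoundedCaratheodory

variable {X : Type*} [MeasurableSpace X] {μ : Measure X} [IsFiniteMeasure μ] {F : ℝ → X → ℝ}
  {C : ℝ}

theorem continuous_integral_of_forall_abs_le (hFc : ∀ p, Continuous (F · p))
    (hFm : ∀ s, Measurable (F s)) (hC : ∀ s p, |F s p| ≤ C) :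
    Continuous fun s => ∫ p, F s p ∂μ :=
  continuous_of_dominated (fun s => (hFm s).aestronglyMeasurable)
    (fun s => ae_of_all _ fun p => hC s p) (integrable_const C) (ae_of_all _ hFc)

theorem integrable_uncurry_swap_of_forall_abs_le {ν : Measure ℝ} [IsFiniteMeasure ν]
    (hFc : ∀ p, Continuous (F · p)) (hFm : ∀ s, Measurable (F s)) (hC : ∀ s p, |F s p| ≤ C) :
    Integrable (Function.uncurry fun p s => F s p) (μ.prod ν) :=
  Integrable.of_bound ((measurable_uncurry_of_continuous_of_measurable hFc hFm).comp
    measurable_swap).aestronglyMeasurable C (ae_of_all _ fun z => hC z.2 z.1)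

theorem integrable_intervalIntegral_of_forall_abs_le (hFc : ∀ p, Continuous (F · p))
    (hFm : ∀ s, Measurable (F s)) (hC : ∀ s p, |F s p| ≤ C) {a b : ℝ} (hab : a ≤ b) :
    Integrable (fun p => ∫ s in a..b, F s p) μ := by
  simp only [intervalIntegral.integral_of_le hab]
  exact (integrable_uncurry_swap_of_forall_abs_le hFc hFm hC).integral_prod_left

theorem integral_intervalIntegral_swap_of_forall_abs_le (hFc : ∀ p, Continuous (F · p))
    (hFm : ∀ s, Measurable (F s)) (hC : ∀ s p, |F s p| ≤ C) {a b : ℝ} (hab : a ≤ b) :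
    ∫ p, (∫ s in a..b, F s p) ∂μ = ∫ s in a..b, ∫ p, F s p ∂μ := by
  simp only [intervalIntegral.integral_of_le hab]
  exact integral_integral_swap (integrable_uncurry_swap_of_forall_abs_le hFc hFm hC)

end BoundedCaratheodory

section CircleSine

variable {Sin : AddCircle (2 * π) → ℝ} {X : Type*} [MeasurableSpace X] {ν : Measure X}

theorem lipschitzWith_one_of_sin_coe (hSin : ∀ r : ℝ, Sin r = sin r) : LipschitzWith 1 Sin :=
  AddCircle.lipschitzWith_of_comp_coe hSin lipschitzWith_sin

theorem abs_le_one_of_sin_coe (hSin : ∀ r : ℝ, Sin r = sin r) (u : AddCircle (2 * π)) :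
    |Sin u| ≤ 1 := by
  obtain ⟨r, rfl⟩ := QuotientAddGroup.mk_surjective u
  exact (hSin r).symm ▸ abs_sin_le_one r

theorem integrable_sin_comp (hSin : ∀ r : ℝ, Sin r = sin r) [IsFiniteMeasure ν]
    {f : X → AddCircle (2 * π)} (hf : Measurable f) : Integrable (fun z => Sin (f z)) ν :=
  Integrable.of_bound
    ((lipschitzWith_one_of_sin_coe hSin).continuous.measurable.comp hf).aestronglyMeasurable 1
    (ae_of_all _ fun z => abs_le_one_of_sin_coe hSin (f z))

theorem integrable_dist_comp [IsFiniteMeasure ν] {f g : X → AddCircle (2 * π)}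
    (hf : Measurable f) (hg : Measurable g) : Integrable (fun z => dist (f z) (g z)) ν :=
  Integrable.of_bound (hf.dist hg).aestronglyMeasurable π
    (ae_of_all _ fun z => by
      simpa [abs_of_nonneg dist_nonneg] using AddCircle.dist_le_pi (f z) (g z))

theorem abs_integral_sin_sub_sub_le (hSin : ∀ r : ℝ, Sin r = sin r) [IsProbabilityMeasure ν]
    {f g : X → AddCircle (2 * π)} (hf : Measurable f) (hg : Measurable g)
    (c c' : AddCircle (2 * π)) :
    |∫ z, Sin (f z - c) ∂ν - ∫ z, Sin (g z - c') ∂ν| ≤ ∫ z, dist (f z) (g z) ∂ν + dist c c' := by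
  have hpt : ∀ z, ‖Sin (f z - c) - Sin (g z - c')‖ ≤ dist (f z) (g z) + dist c c' := fun z =>
    calc ‖Sin (f z - c) - Sin (g z - c')‖ ≤ 1 * dist (f z - c) (g z - c') := by
          rw [← dist_eq_norm]; exact (lipschitzWith_one_of_sin_coe hSin).dist_le_mul _ _
      _ ≤ dist (f z) (g z) + dist c c' := by rw [one_mul]; exact dist_sub_sub_le _ _ _ _
  rw [← integral_sub (integrable_sin_comp hSin (hf.sub_const c))
    (integrable_sin_comp hSin (hg.sub_const c'))]
  calc |∫ z, (Sin (f z - c) - Sin (g z - c')) ∂ν|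
      ≤ ∫ z, (dist (f z) (g z) + dist c c') ∂ν :=
        norm_integral_le_of_norm_le ((integrable_dist_comp hf hg).add (integrable_const _))
          (ae_of_all _ hpt)
    _ = ∫ z, dist (f z) (g z) ∂ν + dist c c' := by
        rw [integral_add (integrable_dist_comp hf hg) (integrable_const _)]
        simp

end CircleSine

/-- The bounded-Lipschitz (Fortet–Mourier) distance between `μ` and `ν` is at most `δ`. -/
def IsBoundedLipschitzClose {X : Type*} [PseudoMetricSpace X] [MeasurableSpace X] (δ : ℝ)
    (μ ν : Measure X) : Prop :=
  ∀ (b : X → ℝ) (Cb Lb : NNReal), (∀ p, |b p| ≤ Cb) → LipschitzWith Lb b →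
    |(∫ p, b p ∂μ) - ∫ p, b p ∂ν| ≤ δ * ((Cb : ℝ) + Lb)

theorem IsBoundedLipschitzClose.abs_integral_sub_le {X : Type*} [PseudoMetricSpace X]
    [MeasurableSpace X] {δ : ℝ} {μ ν : Measure X} (hW : IsBoundedLipschitzClose δ μ ν)
    {b : X → ℝ} {Cb Lb : ℝ} (hCb₀ : 0 ≤ Cb) (hCb : ∀ p, |b p| ≤ Cb) (hLb : 0 ≤ Lb)
    (hb : ∀ p q, dist (b p) (b q) ≤ Lb * dist p q) :
    |∫ p, b p ∂μ - ∫ p, b p ∂ν| ≤ δ * (Cb + Lb) := by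
  simpa [Real.coe_toNNReal _ hCb₀, Real.coe_toNNReal _ hLb] using
    hW b Cb.toNNReal Lb.toNNReal (by simpa [Real.coe_toNNReal _ hCb₀] using hCb)
      (LipschitzWith.of_dist_le' hb)

def kuramotoVelocity (K : ℝ) (Sin : AddCircle (2 * π) → ℝ) (h : Measure (AddCircle (2 * π) × ℝ))
    (x : ℝ → AddCircle (2 * π) × ℝ → AddCircle (2 * π)) (t : ℝ) (p : AddCircle (2 * π) × ℝ) :
    ℝ :=
  p.2 + K * ∫ q, Sin (x t q - x t p) ∂h

/-- Flows are only measurable at times `t ≥ 0`; clamping the time at `0` makes the gap jointly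
measurable. -/
def flowGap (x₁ x₂ : ℝ → AddCircle (2 * π) × ℝ → AddCircle (2 * π)) (s : ℝ)
    (p : AddCircle (2 * π) × ℝ) : ℝ :=
  dist (x₁ (max s 0) p) (x₂ (max s 0) p)

section FlowGap

variable {x₁ x₂ : ℝ → AddCircle (2 * π) × ℝ → AddCircle (2 * π)}

theorem flowGap_of_nonneg {s : ℝ} (hs : 0 ≤ s) (p : AddCircle (2 * π) × ℝ) :
    flowGap x₁ x₂ s p = dist (x₁ s p) (x₂ s p) := by
  rw [flowGap, max_eq_left hs]

theorem abs_flowGap_le_pi (s : ℝ) (p : AddCircle (2 * π) × ℝ) : |flowGap x₁ x₂ s p| ≤ π :=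
  (abs_of_nonneg dist_nonneg).trans_le (AddCircle.dist_le_pi _ _)

end FlowGap

namespace IsKuramotoFlow

variable {K : ℝ} {Sin : AddCircle (2 * π) → ℝ} {h h' h₁ h₂ : Measure (AddCircle (2 * π) × ℝ)}
  {x x' x₁ x₂ : ℝ → AddCircle (2 * π) × ℝ → AddCircle (2 * π)}

theorem continuous_apply (hx : IsKuramotoFlow K Sin h x) (p : AddCircle (2 * π) × ℝ) :
    Continuous fun t => x t p := by
  obtain ⟨y, hy, hyx, -⟩ := hx.2.2 p
  exact ((AddCircle.continuous_mk' _).comp hy.continuous).congr hyx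

theorem measurable_prodMk (hx : IsKuramotoFlow K Sin h x) {t : ℝ} (ht : 0 ≤ t) :
    Measurable fun p : AddCircle (2 * π) × ℝ => (x t p, p.2) :=
  (hx.2.1 t ht).prodMk measurable_snd

theorem dist_le_add_intervalIntegral (hx : IsKuramotoFlow K Sin h x)
    (hx' : IsKuramotoFlow K Sin h' x') (p p' : AddCircle (2 * π) × ℝ) {t : ℝ} (ht : 0 ≤ t)
    {B : ℝ → ℝ} (hB : IntervalIntegrable B volume 0 t)
    (hv : ∀ s ∈ Icc 0 t,
      |kuramotoVelocity K Sin h x s p - kuramotoVelocity K Sin h' x' s p'| ≤ B s) :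
    dist (x t p) (x' t p') ≤ dist p.1 p'.1 + ∫ s in 0..t, B s := by
  obtain ⟨y, hy, hyx, hyv⟩ := hx.2.2 p
  obtain ⟨y', hy', hyx', hyv'⟩ := hx'.2.2 p'
  have := AddCircle.dist_coe_le_add_intervalIntegral (p := 2 * π) hy hy' ht hB fun s hs => by
    rw [(hyv s hs.1).deriv, (hyv' s hs.1).deriv]
    exact hv s hs
  simpa only [hyx, hyx', hx.1, hx'.1] using this

theorem abs_kuramotoVelocity_sub_le (hSin : ∀ r : ℝ, Sin r = sin r)
    (hx : IsKuramotoFlow K Sin h x) (hx' : IsKuramotoFlow K Sin h' x') [IsProbabilityMeasure h']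
    (hK : 0 ≤ K) {t : ℝ} (ht : 0 ≤ t) (p p' : AddCircle (2 * π) × ℝ) :
    |kuramotoVelocity K Sin h x t p - kuramotoVelocity K Sin h' x' t p'| ≤
      |p.2 - p'.2| + K * (|∫ q, Sin (x t q - x t p) ∂h - ∫ q, Sin (x t q - x t p) ∂h'| +
        (∫ q, dist (x t q) (x' t q) ∂h' + dist (x t p) (x' t p'))) := by
  have hcross := abs_integral_sin_sub_sub_le hSin (ν := h') (hx.2.1 t ht) (hx'.2.1 t ht)
    (x t p) (x' t p')
  set I := ∫ q, Sin (x t q - x t p) ∂h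
  set J := ∫ q, Sin (x t q - x t p) ∂h'
  set J' := ∫ q, Sin (x' t q - x' t p') ∂h'
  calc |kuramotoVelocity K Sin h x t p - kuramotoVelocity K Sin h' x' t p'|
      = |(p.2 - p'.2) + K * ((I - J) + (J - J'))| := by
        simp only [kuramotoVelocity, I, J']; ring_nf
    _ ≤ |p.2 - p'.2| + K * (|I - J| + |J - J'|) := by
        refine (abs_add_le _ _).trans ?_
        rw [abs_mul, abs_of_nonneg hK]
        gcongr
        exact abs_add_le _ _
    _ ≤ _ := by gcongr

theorem dist_le_mul_dist (hSin : ∀ r : ℝ, Sin r = sin r) (hx : IsKuramotoFlow K Sin h x)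
    [IsProbabilityMeasure h] (hK : 0 ≤ K) {s T : ℝ} (hs : s ∈ Icc 0 T)
    (q q' : AddCircle (2 * π) × ℝ) :
    dist (x s q) (x s q') ≤ (1 + T) * exp (K * T) * dist q q' := by
  have hg : Continuous fun t => dist (x t q) (x t q') :=
    (hx.continuous_apply q).dist (hx.continuous_apply q')
  have hint : ∀ t ∈ Icc 0 T, dist (x t q) (x t q') ≤
      (dist q.1 q'.1 + |q.2 - q'.2| * T) + K * ∫ r in 0..t, dist (x r q) (x r q') := by
    intro t ht
    have hKg : IntervalIntegrable (fun r => K * dist (x r q) (x r q')) volume 0 t :=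
      (continuous_const.mul hg).intervalIntegrable 0 t
    have := hx.dist_le_add_intervalIntegral hx q q' ht.1
      (intervalIntegrable_const.add hKg) fun r hr => by
        simpa using hx.abs_kuramotoVelocity_sub_le hSin hx hK hr.1 q q'
    rw [intervalIntegral.integral_add intervalIntegrable_const hKg,
      intervalIntegral.integral_const, intervalIntegral.integral_const_mul,
      smul_eq_mul, sub_zero] at this
    nlinarith [abs_nonneg (q.2 - q'.2), ht.2]
  have hq₁ : dist q.1 q'.1 ≤ dist q q' := le_max_left _ _
  have hq₂ : |q.2 - q'.2| ≤ dist q q' := le_max_right (dist q.1 q'.1) _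
  have hT : 0 ≤ T := hs.1.trans hs.2
  calc dist (x s q) (x s q') ≤ (dist q.1 q'.1 + |q.2 - q'.2| * T) * exp (K * s) :=
        le_mul_exp_of_le_add_mul_intervalIntegral hg hK hint s hs
    _ ≤ (dist q q' + dist q q' * T) * exp (K * T) := by
        gcongr
        exact hs.2
    _ = (1 + T) * exp (K * T) * dist q q' := by ring

theorem abs_integral_comp_sub_le (hSin : ∀ r : ℝ, Sin r = sin r) (hx : IsKuramotoFlow K Sin h x)
    [IsProbabilityMeasure h] (hK : 0 ≤ K) {δ : ℝ} {μ ν : Measure (AddCircle (2 * π) × ℝ)}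
    (hW : IsBoundedLipschitzClose δ μ ν) {t T : ℝ} (ht : t ∈ Icc 0 T)
    {a : AddCircle (2 * π) × ℝ → ℝ} {Ca : ℝ} (haB : ∀ p, |a p| ≤ Ca) {La : NNReal}
    (ha : LipschitzWith La a) :
    |∫ p, a (x t p, p.2) ∂μ - ∫ p, a (x t p, p.2) ∂ν| ≤
      δ * (Ca + La * ((1 + T) * exp (K * T))) := by
  have hT : 0 ≤ T := ht.1.trans ht.2
  have hL : 1 ≤ (1 + T) * exp (K * T) :=
    one_le_mul_of_one_le_of_one_le (by linarith) (one_le_exp (by positivity))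
  refine hW.abs_integral_sub_le ((abs_nonneg _).trans (haB 0)) (fun p => haB _) (by positivity)
    fun q q' => ?_
  calc dist (a (x t q, q.2)) (a (x t q', q'.2)) ≤ La * dist (x t q, q.2) (x t q', q'.2) :=
        ha.dist_le_mul _ _
    _ ≤ La * ((1 + T) * exp (K * T) * dist q q') := by
        gcongr
        refine max_le (hx.dist_le_mul_dist hSin hK ht q q') ?_
        exact (le_max_right (dist q.1 q'.1) _).trans
          (le_mul_of_one_le_left (dist_nonneg (x := q)) hL)
    _ = La * ((1 + T) * exp (K * T)) * dist q q' := by ring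

theorem abs_integral_comp_sub_comp_le (hx₁ : IsKuramotoFlow K Sin h₁ x₁)
    (hx₂ : IsKuramotoFlow K Sin h₂ x₂) {ν : Measure (AddCircle (2 * π) × ℝ)} [IsFiniteMeasure ν]
    {t : ℝ} (ht : 0 ≤ t) {a : AddCircle (2 * π) × ℝ → ℝ} {Ca : ℝ} (haB : ∀ p, |a p| ≤ Ca)
    {La : NNReal} (ha : LipschitzWith La a) :
    |∫ p, a (x₁ t p, p.2) ∂ν - ∫ p, a (x₂ t p, p.2) ∂ν| ≤ La * ∫ p, dist (x₁ t p) (x₂ t p) ∂ν := by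
  have hint : ∀ {x : ℝ → AddCircle (2 * π) × ℝ → AddCircle (2 * π)} {h},
      IsKuramotoFlow K Sin h x → Integrable (fun p => a (x t p, p.2)) ν := fun hx =>
    Integrable.of_bound
      (ha.continuous.measurable.comp (hx.measurable_prodMk ht)).aestronglyMeasurable Ca
      (ae_of_all _ fun p => haB _)
  have hpt : ∀ p, ‖a (x₁ t p, p.2) - a (x₂ t p, p.2)‖ ≤ La * dist (x₁ t p) (x₂ t p) := fun p => by
    simpa [← dist_eq_norm, Prod.dist_eq] using ha.dist_le_mul (x₁ t p, p.2) (x₂ t p, p.2)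
  rw [← integral_sub (hint hx₁) (hint hx₂), ← integral_const_mul]
  exact norm_integral_le_of_norm_le
    ((integrable_dist_comp (hx₁.2.1 t ht) (hx₂.2.1 t ht)).const_mul _) (ae_of_all _ hpt)

theorem continuous_flowGap (hx₁ : IsKuramotoFlow K Sin h₁ x₁) (hx₂ : IsKuramotoFlow K Sin h₂ x₂)
    (p : AddCircle (2 * π) × ℝ) : Continuous (flowGap x₁ x₂ · p) :=
  ((hx₁.continuous_apply p).comp (continuous_id.max continuous_const)).dist
    ((hx₂.continuous_apply p).comp (continuous_id.max continuous_const))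

theorem measurable_flowGap (hx₁ : IsKuramotoFlow K Sin h₁ x₁) (hx₂ : IsKuramotoFlow K Sin h₂ x₂)
    (s : ℝ) : Measurable (flowGap x₁ x₂ s) :=
  (hx₁.2.1 _ (le_max_right s 0)).dist (hx₂.2.1 _ (le_max_right s 0))

theorem continuous_integral_flowGap (hx₁ : IsKuramotoFlow K Sin h₁ x₁)
    (hx₂ : IsKuramotoFlow K Sin h₂ x₂) (ν : Measure (AddCircle (2 * π) × ℝ)) [IsFiniteMeasure ν] :
    Continuous fun s => ∫ p, flowGap x₁ x₂ s p ∂ν :=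
  continuous_integral_of_forall_abs_le (continuous_flowGap hx₁ hx₂) (measurable_flowGap hx₁ hx₂)
    abs_flowGap_le_pi

theorem flowGap_le_intervalIntegral (hSin : ∀ r : ℝ, Sin r = sin r)
    (hx₁ : IsKuramotoFlow K Sin h₁ x₁) (hx₂ : IsKuramotoFlow K Sin h₂ x₂)
    [IsProbabilityMeasure h₁] [IsProbabilityMeasure h₂] (hK : 0 ≤ K) {δ : ℝ}
    (hW : IsBoundedLipschitzClose δ h₁ h₂) {t T : ℝ} (ht : t ∈ Icc 0 T)
    (p : AddCircle (2 * π) × ℝ) :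
    flowGap x₁ x₂ t p ≤ ∫ s in 0..t,
      K * (δ * (1 + (1 + T) * exp (K * T)) + ∫ q, flowGap x₁ x₂ s q ∂h₂ + flowGap x₁ x₂ s p) := by
  have hB : Continuous fun s =>
      K * (δ * (1 + (1 + T) * exp (K * T)) + ∫ q, flowGap x₁ x₂ s q ∂h₂ + flowGap x₁ x₂ s p) :=
    continuous_const.mul ((continuous_const.add (continuous_integral_flowGap hx₁ hx₂ h₂)).add
      (continuous_flowGap hx₁ hx₂ p))
  rw [flowGap_of_nonneg ht.1]
  simpa using hx₁.dist_le_add_intervalIntegral hx₂ p p ht.1 (hB.intervalIntegrable 0 t)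
    fun s hs => by
      have hsin : LipschitzWith 1 fun q : AddCircle (2 * π) × ℝ => Sin (q.1 - x₁ s p) := by
        simpa [sub_eq_add_neg, Function.comp_def] using (lipschitzWith_one_of_sin_coe hSin).comp
          ((isometry_add_right (-x₁ s p)).lipschitz.comp LipschitzWith.prod_fst)
      have hW' := hx₁.abs_integral_comp_sub_le hSin hK hW ⟨hs.1, hs.2.trans ht.2⟩
        (fun q => abs_le_one_of_sin_coe hSin _) hsin
      refine (hx₁.abs_kuramotoVelocity_sub_le hSin hx₂ hK hs.1 p p).trans ?_
      simp only [sub_self, abs_zero, zero_add, flowGap_of_nonneg hs.1, ← add_assoc]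
      gcongr
      simpa using hW'

theorem integral_dist_le (hSin : ∀ r : ℝ, Sin r = sin r) (hx₁ : IsKuramotoFlow K Sin h₁ x₁)
    (hx₂ : IsKuramotoFlow K Sin h₂ x₂) [IsProbabilityMeasure h₁] [IsProbabilityMeasure h₂]
    (hK : 0 ≤ K) {δ : ℝ} (hδ : 0 ≤ δ) (hW : IsBoundedLipschitzClose δ h₁ h₂) {t T : ℝ}
    (ht : t ∈ Icc 0 T) :
    ∫ p, dist (x₁ t p) (x₂ t p) ∂h₂ ≤
      K * (δ * (1 + (1 + T) * exp (K * T))) * T * exp (2 * K * T) := by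
  have hT : 0 ≤ T := ht.1.trans ht.2
  set c := δ * (1 + (1 + T) * exp (K * T))
  set ψ := fun s => ∫ p, flowGap x₁ x₂ s p ∂h₂
  have hψ : Continuous ψ := continuous_integral_flowGap hx₁ hx₂ h₂
  have hψπ : ∀ s, |ψ s| ≤ π := fun s => by
    simpa using norm_integral_le_of_norm_le_const (μ := h₂) (f := flowGap x₁ x₂ s)
      (ae_of_all _ (abs_flowGap_le_pi s))
  -- integrating `flowGap_le_intervalIntegral` against `h₂` (Fubini) closes the inequality on `ψ`
  have hψle : ∀ s ∈ Icc 0 T, ψ s ≤ K * c * T + 2 * K * ∫ r in 0..s, ψ r := by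
    intro s hs
    set F := fun r p => K * (c + ψ r + flowGap x₁ x₂ r p)
    have hFc : ∀ p, Continuous (F · p) := fun p =>
      continuous_const.mul ((continuous_const.add hψ).add (continuous_flowGap hx₁ hx₂ p))
    have hFm : ∀ r, Measurable (F r) := fun r =>
      ((measurable_flowGap hx₁ hx₂ r).const_add _).const_mul K
    have hFC : ∀ r p, |F r p| ≤ K * (|c| + π + π) := fun r p => by
      rw [abs_mul, abs_of_nonneg hK]
      gcongr
      exact (abs_add_three _ _ _).trans (add_le_add_three le_rfl (hψπ r) (abs_flowGap_le_pi r p))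
    have hgap : ∀ r, Integrable (flowGap x₁ x₂ r) h₂ := fun r =>
      Integrable.of_bound (measurable_flowGap hx₁ hx₂ r).aestronglyMeasurable π
        (ae_of_all _ (abs_flowGap_le_pi r))
    calc ψ s ≤ ∫ p, (∫ r in 0..s, F r p) ∂h₂ :=
          integral_mono (hgap s) (integrable_intervalIntegral_of_forall_abs_le hFc hFm hFC hs.1)
            fun p => flowGap_le_intervalIntegral hSin hx₁ hx₂ hK hW hs p
      _ = ∫ r in 0..s, ∫ p, F r p ∂h₂ :=
          integral_intervalIntegral_swap_of_forall_abs_le hFc hFm hFC hs.1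
      _ = ∫ r in 0..s, (K * c + 2 * K * ψ r) := by
          congr 1; ext r
          rw [integral_const_mul, integral_add (integrable_const _) (hgap r), integral_const,
            probReal_univ, one_smul]
          ring
      _ = K * c * s + 2 * K * ∫ r in 0..s, ψ r := by
          have hψi : IntervalIntegrable (fun r => 2 * K * ψ r) volume 0 s :=
            (continuous_const.mul hψ).intervalIntegrable 0 s
          rw [intervalIntegral.integral_add intervalIntegrable_const hψi,
            intervalIntegral.integral_const, intervalIntegral.integral_const_mul, smul_eq_mul,
            sub_zero]
          ring
      _ ≤ K * c * T + 2 * K * ∫ r in 0..s, ψ r := by gcongr; exact hs.2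
  calc ∫ p, dist (x₁ t p) (x₂ t p) ∂h₂ = ψ t := by simp only [ψ, flowGap_of_nonneg ht.1]
    _ ≤ K * c * T * exp (2 * K * t) :=
        le_mul_exp_of_le_add_mul_intervalIntegral hψ (by positivity) hψle t ht
    _ ≤ K * c * T * exp (2 * K * T) := by gcongr; exact ht.2

end IsKuramotoFlow

/-- For `K > 0`, `T > 0` and a bounded Lipschitz test function `a`,
there is a constant `C > 0` (depending on `K`, `T` and `a`) such that for every `δ > 0`
and all initial probability measures `h₁, h₂` with
`|∫ b (dh₁ − dh₂)| ≤ δ (sup|b| + Lip(b))` for every bounded Lipschitz `b`, the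
corresponding solutions of the continuous Kuramoto model satisfy
`|∫ a (dρ_{t,1} − dρ_{t,2})| ≤ C δ` for all `0 ≤ t ≤ T`: for Lipschitz test functions the
weak distance of solutions is `O(δ)` in the weak distance of the initial measures. -/
theorem lipschitz_dependence_on_initial_measure
    (K T : ℝ) (hK : 0 < K) (hT : 0 < T)
    (Sin : AddCircle (2 * π) → ℝ)
    (hSin : ∀ r : ℝ, Sin (r : AddCircle (2 * π)) = Real.sin r)
    (a : AddCircle (2 * π) × ℝ → ℝ)
    (Ca : ℝ) (haB : ∀ p, |a p| ≤ Ca)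
    (La : NNReal) (haLip : LipschitzWith La a) :
    ∃ C : ℝ, 0 < C ∧
      ∀ δ : ℝ, 0 < δ →
      ∀ (h₁ h₂ : Measure (AddCircle (2 * π) × ℝ)),
        IsProbabilityMeasure h₁ → IsProbabilityMeasure h₂ →
        ∀ (x₁ x₂ : ℝ → AddCircle (2 * π) × ℝ → AddCircle (2 * π)),
          IsKuramotoFlow K Sin h₁ x₁ → IsKuramotoFlow K Sin h₂ x₂ →
          (∀ (b : AddCircle (2 * π) × ℝ → ℝ) (Cb Lb : NNReal),
            (∀ p, |b p| ≤ Cb) → LipschitzWith Lb b →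
            |(∫ p, b p ∂h₁) - ∫ p, b p ∂h₂| ≤ δ * ((Cb : ℝ) + Lb)) →
          ∀ t : ℝ, 0 ≤ t → t ≤ T →
            |(∫ p, a p ∂(h₁.map fun p => (x₁ t p, p.2))) -
              ∫ p, a p ∂(h₂.map fun p => (x₂ t p, p.2))| ≤ C * δ := by
  have hCa : 0 ≤ Ca := (abs_nonneg _).trans (haB 0)
  set L := (1 + T) * exp (K * T)
  set D := K * (1 + L) * T * exp (2 * K * T)
  refine ⟨Ca + La * L + La * D + 1, by positivity, ?_⟩
  intro δ hδ h₁ h₂ _ _ x₁ x₂ hx₁ hx₂ hW t ht₀ htT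
  have ht : t ∈ Icc 0 T := ⟨ht₀, htT⟩
  have hmap : ∀ {h x}, IsKuramotoFlow K Sin h x →
      ∫ p, a p ∂(h.map fun p => (x t p, p.2)) = ∫ p, a (x t p, p.2) ∂h := fun hx =>
    integral_map (hx.measurable_prodMk ht₀).aemeasurable haLip.continuous.aestronglyMeasurable
  rw [hmap hx₁, hmap hx₂]
  calc _ ≤ |∫ p, a (x₁ t p, p.2) ∂h₁ - ∫ p, a (x₁ t p, p.2) ∂h₂| +
        |∫ p, a (x₁ t p, p.2) ∂h₂ - ∫ p, a (x₂ t p, p.2) ∂h₂| := abs_sub_le _ _ _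
    _ ≤ δ * (Ca + La * L) + La * (K * (δ * (1 + L)) * T * exp (2 * K * T)) := by
        gcongr
        · exact hx₁.abs_integral_comp_sub_le hSin hK.le hW ht haB haLip
        · exact (hx₁.abs_integral_comp_sub_comp_le hx₂ ht₀ haB haLip).trans
            (by gcongr; exact hx₁.integral_dist_le hSin hx₂ hK.le hδ.le hW ht)
    _ ≤ (Ca + La * L + La * D + 1) * δ := by nlinarith
end
end
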